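/- Let G be a finite group. At most one Sylow subgroup of G (over all primes, including the trivial Sylow subgroups for primes not dividing |G|) attains the maximum Chermak–Delgado measure of G. -/

import Mathlib

/-!
For subgroups `H, K` the product formula `|H ∩ K| |HK| = |H| |K|`, applied to `H, K` and to
`C(H), C(K)`, together with `C(H ⊔ K) = C(H) ∩ C(K)`, `HK ⊆ H ⊔ K` and
`C(H) C(K) ⊆ C(H ∩ K)`, gives `m(H) m(K) ≤ m(H ∩ K) m(H ⊔ K)`. So if `H` and `K` both attain
the maximum `M`, then so does `H ∩ K`, and equality forces `|HK| = |H ⊔ K|`.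

For Sylow subgroups `S, T` of the same prime `p`, `|S ⊔ T| = |S| |T| / |S ∩ T|` is then a power
of `p`, so `S ⊔ T` is a `p`-group containing both and `S = T`. For distinct primes `S ∩ T = 1`
attains `M = m(1) = |G|`, so `|C(S)| = |G : S|` is prime to `p`; then `Z(S) = S ∩ C(S)` is
trivial, which forces the `p`-group `S` to be trivial, and likewise `T`.
-/

/-- The Chermak–Delgado measure of a subgroup. -/
noncomputable def cdMeasure {G : Type*} [Group G] (H : Subgroup G) : ℕ :=
  Nat.card H * Nat.card (Subgroup.centralizer (H : Set G))

open Subgroup Pointwise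

section

variable {G : Type*} [Group G]

namespace Subgroup

theorem card_inf_mul_card_mul (H K : Subgroup G) :
    Nat.card (H ⊓ K : Subgroup G) * Nat.card ((H : Set G) * (K : Set G)) =
      Nat.card H * Nat.card K := by
  have smul_one (h : H) : h • ((1 : G) : G ⧸ K) = ((h : G) : G ⧸ K) := by
    change ((h * 1 : G) : G ⧸ K) = _
    rw [mul_one]
  have orbit_eq : MulAction.orbit H ((1 : G) : G ⧸ K) = QuotientGroup.mk '' (H : Set G) := by
    ext x
    simp [MulAction.mem_orbit_iff, smul_one]
  have stabilizer_eq : MulAction.stabilizer H ((1 : G) : G ⧸ K) = (H ⊓ K).subgroupOf H := by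
    rw [inf_subgroupOf_left]
    ext x
    simp [MulAction.mem_stabilizer_iff, mem_subgroupOf, smul_one, QuotientGroup.eq]
  have card_subgroupOf : Nat.card ((H ⊓ K).subgroupOf H) = Nat.card (H ⊓ K : Subgroup G) :=
    Nat.card_congr (subgroupOfEquivOfLe inf_le_left).toEquiv
  rw [card_mul_eq_card_subgroup_mul_card_quotient, ← orbit_eq, Nat.card_coe_set_eq,
    ← MulAction.index_stabilizer, stabilizer_eq, ← card_subgroupOf,
    ← card_mul_index ((H ⊓ K).subgroupOf H)]
  ring

theorem centralizer_sup (H K : Subgroup G) :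
    centralizer ((H ⊔ K : Subgroup G) : Set G) =
      centralizer (H : Set G) ⊓ centralizer (K : Set G) := by
  rw [← closure_eq H, ← closure_eq K, ← closure_union, centralizer_closure]
  ext
  simp [mem_centralizer_iff, or_imp, forall_and]

theorem card_mul_le_card_of_le [Finite G] {H K L : Subgroup G} (hH : H ≤ L) (hK : K ≤ L) :
    Nat.card ((H : Set G) * (K : Set G)) ≤ Nat.card L :=
  Nat.card_mono (Set.toFinite _) <|
    Set.mul_subset_iff.mpr fun _ hx _ hy => L.mul_mem (hH hx) (hK hy)

theorem card_mul_le_card_sup [Finite G] (H K : Subgroup G) :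
    Nat.card ((H : Set G) * (K : Set G)) ≤ Nat.card (H ⊔ K : Subgroup G) :=
  card_mul_le_card_of_le le_sup_left le_sup_right

theorem card_centralizer_mul_le [Finite G] (H K : Subgroup G) :
    Nat.card ((centralizer (H : Set G) : Set G) * (centralizer (K : Set G) : Set G)) ≤
      Nat.card (centralizer ((H ⊓ K : Subgroup G) : Set G)) :=
  card_mul_le_card_of_le (centralizer_le inf_le_left) (centralizer_le inf_le_right)

end Subgroup

theorem IsPGroup.sup_of_card_mul_eq_card_sup [Finite G] {p : ℕ}
    [Fact p.Prime] {H K : Subgroup G} (hH : IsPGroup p H) (hK : IsPGroup p K)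
    (h : Nat.card ((H : Set G) * (K : Set G)) = Nat.card (H ⊔ K : Subgroup G)) :
    IsPGroup p (H ⊔ K : Subgroup G) := by
  obtain ⟨a, ha⟩ := IsPGroup.iff_card.mp hH
  obtain ⟨b, hb⟩ := IsPGroup.iff_card.mp hK
  have hdvd : Nat.card (H ⊔ K : Subgroup G) ∣ p ^ (a + b) :=
    ⟨Nat.card (H ⊓ K : Subgroup G), by
      rw [pow_add, ← ha, ← hb, ← card_inf_mul_card_mul, h, mul_comm]⟩
  obtain ⟨n, -, hn⟩ := (Nat.dvd_prime_pow Fact.out).mp hdvd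
  exact IsPGroup.of_card hn

/-- A nontrivial `p`-group has nontrivial centre, which lies in `H ⊓ centralizer H`. -/
theorem IsPGroup.eq_bot_of_not_dvd_card_centralizer [Finite G] {p : ℕ}
    [Fact p.Prime] {H : Subgroup G} (hH : IsPGroup p H)
    (hp : ¬ p ∣ Nat.card (centralizer (H : Set G))) : H = ⊥ := by
  have inf_eq_bot : H ⊓ centralizer (H : Set G) = ⊥ :=
    card_eq_one.mp <| (hH.to_le inf_le_left).card_eq_or_dvd.resolve_right
      fun hdvd => hp (hdvd.trans (card_dvd_of_le inf_le_right))
  by_contra hne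
  have : Nontrivial H := (nontrivial_iff_ne_bot H).mpr hne
  obtain ⟨z, hz, hz1⟩ := SetLike.exists_of_lt hH.bot_lt_center
  have hzC : (z : G) ∈ H ⊓ centralizer (H : Set G) :=
    ⟨z.2, fun h hh => congrArg Subtype.val (mem_center_iff.mp hz ⟨h, hh⟩)⟩
  rw [inf_eq_bot, mem_bot] at hzC
  exact hz1 (Subtype.ext hzC)

theorem Sylow.eq_of_isPGroup_sup {p : ℕ} (S T : Sylow p G)
    (h : IsPGroup p (S ⊔ T : Subgroup G)) : (S : Subgroup G) = T :=
  T.is_maximal' S.isPGroup' (S.is_maximal' h le_sup_left ▸ le_sup_right)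

theorem cdMeasure_bot : cdMeasure (⊥ : Subgroup G) = Nat.card G := by
  rw [cdMeasure, coe_bot, centralizer_eq_top_iff_subset.mpr (by simp), card_bot, card_top, one_mul]

theorem cdMeasure_pos [Finite G] (H : Subgroup G) : 0 < cdMeasure H :=
  Nat.mul_pos Nat.card_pos Nat.card_pos

theorem cdMeasure_mul_cdMeasure (H K : Subgroup G) :
    cdMeasure H * cdMeasure K =
      Nat.card (H ⊓ K : Subgroup G) * Nat.card (centralizer ((H ⊔ K : Subgroup G) : Set G)) *
        (Nat.card ((H : Set G) * (K : Set G)) *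
          Nat.card ((centralizer (H : Set G) : Set G) * (centralizer (K : Set G) : Set G))) := by
  have := congrArg₂ (· * ·) (card_inf_mul_card_mul H K)
    (card_inf_mul_card_mul (centralizer (H : Set G)) (centralizer (K : Set G)))
  rw [centralizer_sup, cdMeasure, cdMeasure, mul_mul_mul_comm (Nat.card H), ← this]
  ring

theorem cdMeasure_inf_mul_cdMeasure_sup (H K : Subgroup G) :
    cdMeasure (H ⊓ K) * cdMeasure (H ⊔ K) =
      Nat.card (H ⊓ K : Subgroup G) * Nat.card (centralizer ((H ⊔ K : Subgroup G) : Set G)) *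
        (Nat.card (H ⊔ K : Subgroup G) * Nat.card (centralizer ((H ⊓ K : Subgroup G) : Set G))) := by
  rw [cdMeasure, cdMeasure]
  ring

theorem cdMeasure_mul_le_cdMeasure_inf_mul_cdMeasure_sup [Finite G] (H K : Subgroup G) :
    cdMeasure H * cdMeasure K ≤ cdMeasure (H ⊓ K) * cdMeasure (H ⊔ K) := by
  rw [cdMeasure_mul_cdMeasure, cdMeasure_inf_mul_cdMeasure_sup]
  gcongr
  · exact card_mul_le_card_sup H K
  · exact card_centralizer_mul_le H K

theorem card_mul_eq_card_sup_of_cdMeasure_mul_eq [Finite G] {H K : Subgroup G}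
    (h : cdMeasure H * cdMeasure K = cdMeasure (H ⊓ K) * cdMeasure (H ⊔ K)) :
    Nat.card ((H : Set G) * (K : Set G)) = Nat.card (H ⊔ K : Subgroup G) := by
  rw [cdMeasure_mul_cdMeasure, cdMeasure_inf_mul_cdMeasure_sup] at h
  have hcards := Nat.eq_of_mul_eq_mul_left (Nat.mul_pos Nat.card_pos Nat.card_pos) h
  have hC_pos : 0 < Nat.card (centralizer ((H ⊓ K : Subgroup G) : Set G)) := Nat.card_pos
  refine le_antisymm (card_mul_le_card_sup H K) (Nat.le_of_mul_le_mul_right ?_ hC_pos)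
  rw [← hcards]
  exact Nat.mul_le_mul_left _ (card_centralizer_mul_le H K)

/-- `H` lies in the Chermak–Delgado set `CD(G)`. -/
def IsCDMaximal (H : Subgroup G) : Prop :=
  ∀ K : Subgroup G, cdMeasure K ≤ cdMeasure H

namespace IsCDMaximal

variable {H K : Subgroup G}

theorem cdMeasure_eq (hH : IsCDMaximal H) (hK : IsCDMaximal K) : cdMeasure H = cdMeasure K :=
  le_antisymm (hK H) (hH K)

theorem cdMeasure_mul_eq [Finite G] (hH : IsCDMaximal H) (hK : IsCDMaximal K) :
    cdMeasure H * cdMeasure K = cdMeasure (H ⊓ K) * cdMeasure (H ⊔ K) :=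
  le_antisymm (cdMeasure_mul_le_cdMeasure_inf_mul_cdMeasure_sup H K)
    (Nat.mul_le_mul (hH _) (hK _))

theorem cdMeasure_inf [Finite G] (hH : IsCDMaximal H) (hK : IsCDMaximal K) :
    cdMeasure (H ⊓ K) = cdMeasure H := by
  refine le_antisymm (hH _) (Nat.le_of_mul_le_mul_right ?_ (cdMeasure_pos K))
  calc cdMeasure H * cdMeasure K
      = cdMeasure (H ⊓ K) * cdMeasure (H ⊔ K) := hH.cdMeasure_mul_eq hK
    _ ≤ cdMeasure (H ⊓ K) * cdMeasure K := Nat.mul_le_mul_left _ (hK _)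

theorem card_mul_eq_card_sup [Finite G] (hH : IsCDMaximal H) (hK : IsCDMaximal K) :
    Nat.card ((H : Set G) * (K : Set G)) = Nat.card (H ⊔ K : Subgroup G) :=
  card_mul_eq_card_sup_of_cdMeasure_mul_eq (hH.cdMeasure_mul_eq hK)

end IsCDMaximal

theorem Sylow.eq_bot_of_cdMeasure_eq_card [Finite G] {p : ℕ} [Fact p.Prime] (S : Sylow p G)
    (h : cdMeasure (S : Subgroup G) = Nat.card G) : (S : Subgroup G) = ⊥ := by
  have card_centralizer : Nat.card (centralizer ((S : Subgroup G) : Set G)) = S.index :=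
    Nat.eq_of_mul_eq_mul_left Nat.card_pos (h.trans (card_mul_index (S : Subgroup G)).symm)
  exact S.isPGroup'.eq_bot_of_not_dvd_card_centralizer (card_centralizer ▸ S.not_dvd_index)

end

theorem at_most_one_sylow_cd_max
    (G : Type*) [Group G] [Finite G]
    (p q : ℕ) [Fact p.Prime] [Fact q.Prime]
    (S : Sylow p G) (T : Sylow q G)
    (hS : ∀ K : Subgroup G, cdMeasure K ≤ cdMeasure (S : Subgroup G))
    (hT : ∀ K : Subgroup G, cdMeasure K ≤ cdMeasure (T : Subgroup G)) :
    (S : Subgroup G) = (T : Subgroup G) := by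
  rcases eq_or_ne p q with rfl | hpq
  · exact S.eq_of_isPGroup_sup T <|
      S.isPGroup'.sup_of_card_mul_eq_card_sup T.isPGroup' (IsCDMaximal.card_mul_eq_card_sup hS hT)
  · have inf_eq_bot : (S ⊓ T : Subgroup G) = ⊥ :=
      (IsPGroup.disjoint_of_ne p q hpq _ _ S.isPGroup' T.isPGroup').eq_bot
    have hSG : cdMeasure (S : Subgroup G) = Nat.card G := by
      rw [← cdMeasure_bot, ← inf_eq_bot, IsCDMaximal.cdMeasure_inf hS hT]
    have hTG : cdMeasure (T : Subgroup G) = Nat.card G :=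
      (IsCDMaximal.cdMeasure_eq hS hT) ▸ hSG
    rw [S.eq_bot_of_cdMeasure_eq_card hSG, T.eq_bot_of_cdMeasure_eq_card hTG]
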